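/- arXiv:1201.4122 — 3 statements merged into one kernel-verified Lean document; each statement's English description precedes it below -/
import Mathlib

section
/- Characterization of vanishing low-loss damping coefficients (Proposition 2, statements 3 and 4). Let u ∈ ker B be a unit vector and ρ ∈ ℝ be such that P_B^⊥ Ω u = ρ u (i.e., u is an eigenvector of Ω₁ with eigenvalue ρ), and set d := (u, Θ* B₂⁻¹ Θ u). Then: (a) Ω u = ρ u if and only if d = 0; (b) Ω u = 0 if and only if both ρ = 0 and d = 0. -/
/-! Since `P_B Ω u = B y`, the eigen-relation reads `Ω u = ρ u + B y`, and `d = ⟪B y, y⟫`.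
For the positive operator `B` this quadratic form vanishes exactly when `B y = 0`. -/

noncomputable section

variable {H : Type*} [NormedAddCommGroup H] [InnerProductSpace ℂ H] [FiniteDimensional ℂ H]

namespace ContinuousLinearMap

variable {E : Type*} [NormedAddCommGroup E] [InnerProductSpace ℂ E] [CompleteSpace E]

theorem isPositive_of_isSelfAdjoint_of_re_inner_nonneg {T : E →L[ℂ] E} (hT : IsSelfAdjoint T)
    (hpos : ∀ x, 0 ≤ (inner ℂ x (T x)).re) : T.IsPositive :=
  isPositive_def'.mpr ⟨hT, fun x => by
    rw [reApplyInnerSelf_apply, ← inner_re_symm]; exact hpos x⟩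

/-- Writing `T = S† S`, the quadratic form `⟪T x, x⟫ = ‖S x‖²` vanishes only if `S x = 0`. -/
theorem IsPositive.inner_apply_self_eq_zero_iff {T : E →L[ℂ] E} (hT : T.IsPositive) (x : E) :
    inner ℂ (T x) x = 0 ↔ T x = 0 := by
  refine ⟨fun h => ?_, fun h => by rw [h, inner_zero_left]⟩
  obtain ⟨S, rfl⟩ := CStarAlgebra.nonneg_iff_eq_star_mul_self.mp ((nonneg_iff_isPositive T).mpr hT)
  have hSx : S x = 0 := by
    rwa [star_eq_adjoint, mul_apply_eq_comp, adjoint_inner_left, inner_self_eq_zero] at h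
  rw [mul_apply_eq_comp, hSx, map_zero]

end ContinuousLinearMap

theorem statement4_general
    (Ω B : H →L[ℂ] H) (hB : IsSelfAdjoint B)
    (hBpos : ∀ x : H, 0 ≤ (inner ℂ x (B x) : ℂ).re)
    (u : H) (hu1 : ‖u‖ = 1)
    (ρ : ℝ)
    (hρ : Ω u - (Submodule.orthogonalProjectionOnto (LinearMap.range (B : H →ₗ[ℂ] H)) (Ω u) : H) = (ρ : ℂ) • u)
    (y : H)
    (hBy : B y = (Submodule.orthogonalProjectionOnto (LinearMap.range (B : H →ₗ[ℂ] H)) (Ω u) : H))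
    (d : ℝ)
    (hd : (d : ℂ) = inner ℂ ((Submodule.orthogonalProjectionOnto (LinearMap.range (B : H →ₗ[ℂ] H)) (Ω u) : H)) y) :
    (Ω u = (ρ : ℂ) • u ↔ d = 0) ∧ (Ω u = 0 ↔ (ρ = 0 ∧ d = 0)) := by
  set P := Submodule.orthogonalProjectionOnto (LinearMap.range (B : H →ₗ[ℂ] H))
  have hB_pos : B.IsPositive := B.isPositive_of_isSelfAdjoint_of_re_inner_nonneg hB hBpos
  have hd_zero : d = 0 ↔ (P (Ω u) : H) = 0 := by
    rw [← hBy, ← hB_pos.inner_apply_self_eq_zero_iff, hBy, ← hd, Complex.ofReal_eq_zero]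
  have hΩu : Ω u = (ρ : ℂ) • u + P (Ω u) := by rw [← hρ, sub_add_cancel]
  have hu : u ≠ 0 := norm_ne_zero_iff.mp (hu1 ▸ one_ne_zero)
  refine ⟨by rw [hd_zero, ← add_eq_left (a := (ρ : ℂ) • u), ← hΩu],
    fun hΩu0 => ?_, fun ⟨hρ0, hd0⟩ => ?_⟩
  · have hP : (P (Ω u) : H) = 0 := by rw [hΩu0, map_zero, Submodule.coe_zero]
    rw [hΩu, hP, add_zero, smul_eq_zero, Complex.ofReal_eq_zero] at hΩu0
    exact ⟨hΩu0.resolve_right hu, hd_zero.mpr hP⟩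
  · rw [hΩu, hd_zero.mp hd0, hρ0, Complex.ofReal_zero, zero_smul, add_zero]

/-- **Proposition 2, parts 3 and 4: vanishing low-loss damping.**
Let `u ∈ ker B` be a unit vector which is an eigenvector of the compression
`Ω₁ = P_B^⊥ Ω P_B^⊥` with real eigenvalue `ρ`, i.e. `Ω u − P_B Ω u = ρ u`
(here `P_B` is the orthogonal projection onto `H_B = ran B`).  Let
`y = B₂⁻¹ Θ u`, i.e. the unique `y ∈ ran B` with `B y = P_B Ω u`, and let
`d = (u, Θ* B₂⁻¹ Θ u) = (P_B Ω u, y)`.  Then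
(a) `Ω u = ρ u ↔ d = 0`, and (b) `Ω u = 0 ↔ (ρ = 0 ∧ d = 0)`. -/
theorem statement4
    (Ω B : H →L[ℂ] H) (hΩ : IsSelfAdjoint Ω) (hB : IsSelfAdjoint B)
    (hBpos : ∀ x : H, 0 ≤ (inner ℂ x (B x) : ℂ).re)
    (hNB_pos : 0 < Module.finrank ℂ (LinearMap.range (B : H →ₗ[ℂ] H)))
    (hNB_lt : Module.finrank ℂ (LinearMap.range (B : H →ₗ[ℂ] H)) < Module.finrank ℂ H)
    (u : H) (hu : B u = 0) (hu1 : ‖u‖ = 1)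
    (ρ : ℝ)
    (hρ : Ω u - (Submodule.orthogonalProjectionOnto (LinearMap.range (B : H →ₗ[ℂ] H)) (Ω u) : H) = (ρ : ℂ) • u)
    (y : H) (hy : y ∈ LinearMap.range (B : H →ₗ[ℂ] H))
    (hBy : B y = (Submodule.orthogonalProjectionOnto (LinearMap.range (B : H →ₗ[ℂ] H)) (Ω u) : H))
    (d : ℝ)
    (hd : (d : ℂ) = inner ℂ ((Submodule.orthogonalProjectionOnto (LinearMap.range (B : H →ₗ[ℂ] H)) (Ω u) : H)) y) :
    (Ω u = (ρ : ℂ) • u ↔ d = 0) ∧ (Ω u = 0 ↔ (ρ = 0 ∧ d = 0)) :=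
  statement4_general Ω B hB hBpos u hu1 ρ hρ y hBy d hd
end
end

section
/- Asymptotic spectrum (Proposition 3). For every Theorem-1 family: (1) the coefficients ζ̊_j, ẘ_j for 1 ≤ j ≤ N_B form a complete set of eigenvalues and orthonormal eigenvectors of the operator B₂, i.e. B₂ ẘ_j = ζ̊_j ẘ_j; in particular B₂ is positive definite and invertible with B₂⁻¹ > 0; (2) the coefficients ρ_j, ẘ_j for N_B+1 ≤ j ≤ N form a complete set of eigenvalues and orthonormal eigenvectors of the self-adjoint operator Ω₁, i.e. Ω₁ ẘ_j = ρ_j ẘ_j; (3) the low-loss damping coefficients are given by d_j = (ẘ_j, Θ* B₂⁻¹ Θ ẘ_j) for N_B+1 ≤ j ≤ N. -/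
/-! For a low-loss index `j`, pass to the limit `β → ∞` in `A(β) w_j(β) = ζ_j(β) w_j(β)`:
since `B ẘ_j = 0`, the term `iβ B w_j(β)` tends to `i B w_j^{(−1)}`, whence
`Ω ẘ_j = ρ_j ẘ_j + i B w_j^{(−1)}`. As `ẘ_j ∈ ker B = (ran B)ᗮ`, this splits `Ω ẘ_j` along
`H = H_B ⊕ H_B^⊥`: `P_B Ω ẘ_j = i B w_j^{(−1)}`, which gives both `Ω₁ ẘ_j = ρ_j ẘ_j` and, for
`B y = P_B Ω ẘ_j`, `(P_B Ω ẘ_j, y) = (w_j^{(−1)}, B w_j^{(−1)}) = d_j`. On `ran B` the operator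
`B` is injective because `ker B = (ran B)ᗮ`, and positive definite because
`(x, B x) = ‖√B x‖²`. -/

open Filter Asymptotics

noncomputable section

variable {H : Type*} [NormedAddCommGroup H] [InnerProductSpace ℂ H] [FiniteDimensional ℂ H]

/-- The system operator `A(β) = Ω − iβB`. -/
def sysOp (Ω B : H →L[ℂ] H) (β : ℝ) : H →L[ℂ] H :=
  Ω - (Complex.I * (β : ℂ)) • B

/-- A *Theorem-1 family* for the system operator `A(β) = Ω − iβB` in the high-loss
regime: a threshold `β₀ > 0`; an orthonormal family `ẘ_j` whose first `N_B` members
are eigenvectors of `B` in the loss subspace `H_B = ran B` with positive eigenvalues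
`ζ̊_j` and whose remaining members lie in the no-loss subspace `ker B`; vectors
`w_j^{(−1)}`; and eigenvalue/eigenvector branches `ζ_j(β)`, `w_j(β)` of `A(β)`
(forming a basis, so `A(β)` is diagonalizable for `β > β₀`) with the stated
asymptotic expansions as `β → ∞`, where `ρ_j = (ẘ_j, Ω ẘ_j)` and
`d_j = (w_j^{(−1)}, B w_j^{(−1)})`. -/
structure Thm1Family (Ω B : H →L[ℂ] H) where
  β₀ : ℝ
  β₀_pos : 0 < β₀
  w0 : Fin (Module.finrank ℂ H) → H
  ζ0 : Fin (Module.finrank ℂ H) → ℝ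
  wneg : Fin (Module.finrank ℂ H) → H
  ζ : Fin (Module.finrank ℂ H) → ℝ → ℂ
  w : Fin (Module.finrank ℂ H) → ℝ → H
  orth : Orthonormal ℂ w0
  ζ0_pos : ∀ j : Fin (Module.finrank ℂ H),
    (j : ℕ) < Module.finrank ℂ (LinearMap.range (B : H →ₗ[ℂ] H)) → 0 < ζ0 j
  eig0_high : ∀ j : Fin (Module.finrank ℂ H),
    (j : ℕ) < Module.finrank ℂ (LinearMap.range (B : H →ₗ[ℂ] H)) → B (w0 j) = (ζ0 j : ℂ) • w0 j
  eig0_low : ∀ j : Fin (Module.finrank ℂ H),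
    Module.finrank ℂ (LinearMap.range (B : H →ₗ[ℂ] H)) ≤ (j : ℕ) → B (w0 j) = 0
  eig : ∀ β : ℝ, β₀ < β → ∀ j, sysOp Ω B β (w j β) = ζ j β • w j β
  indep : ∀ β : ℝ, β₀ < β → LinearIndependent ℂ fun j => w j β
  ζ_high : ∀ j : Fin (Module.finrank ℂ H),
    (j : ℕ) < Module.finrank ℂ (LinearMap.range (B : H →ₗ[ℂ] H)) →
      (fun β : ℝ => ζ j β - (-Complex.I * (ζ0 j : ℂ) * (β : ℂ)
          + ((inner ℂ (w0 j) (Ω (w0 j)) : ℂ).re : ℂ)))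
        =O[atTop] fun β : ℝ => β⁻¹
  w_high : ∀ j : Fin (Module.finrank ℂ H),
    (j : ℕ) < Module.finrank ℂ (LinearMap.range (B : H →ₗ[ℂ] H)) →
      (fun β : ℝ => w j β - w0 j) =O[atTop] fun β : ℝ => β⁻¹
  ζ_low : ∀ j : Fin (Module.finrank ℂ H),
    Module.finrank ℂ (LinearMap.range (B : H →ₗ[ℂ] H)) ≤ (j : ℕ) →
      (fun β : ℝ => ζ j β - (((inner ℂ (w0 j) (Ω (w0 j)) : ℂ).re : ℂ)
          - Complex.I * ((inner ℂ (wneg j) (B (wneg j)) : ℂ).re : ℂ) * (β : ℂ)⁻¹))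
        =O[atTop] fun β : ℝ => (β ^ 2)⁻¹
  w_low : ∀ j : Fin (Module.finrank ℂ H),
    Module.finrank ℂ (LinearMap.range (B : H →ₗ[ℂ] H)) ≤ (j : ℕ) →
      (fun β : ℝ => w j β - (w0 j + ((β : ℂ))⁻¹ • wneg j)) =O[atTop] fun β : ℝ => (β ^ 2)⁻¹

/-- `ρ_j = (ẘ_j, Ω ẘ_j)`. -/
def Thm1Family.ρ {Ω B : H →L[ℂ] H} (F : Thm1Family Ω B)
    (j : Fin (Module.finrank ℂ H)) : ℝ :=
  (inner ℂ (F.w0 j) (Ω (F.w0 j)) : ℂ).re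

/-- `d_j = (w_j^{(−1)}, B w_j^{(−1)})`. -/
def Thm1Family.d {Ω B : H →L[ℂ] H} (F : Thm1Family Ω B)
    (j : Fin (Module.finrank ℂ H)) : ℝ :=
  (inner ℂ (F.wneg j) (B (F.wneg j)) : ℂ).re

open Topology

namespace LinearMap.IsSymmetric

variable {𝕜 E : Type*} [RCLike 𝕜] [NormedAddCommGroup E] [InnerProductSpace 𝕜 E]
  {T : E →ₗ[𝕜] E}

theorem injOn_range (hT : T.IsSymmetric) : Set.InjOn T (LinearMap.range T) := by
  intro x hx y hy hxy
  have hmem : x - y ∈ LinearMap.range T ⊓ (LinearMap.range T)ᗮ := by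
    refine Submodule.mem_inf.2 ⟨sub_mem hx hy, ?_⟩
    rw [hT.orthogonal_range, LinearMap.mem_ker, map_sub, hxy, sub_self]
  rwa [Submodule.inf_orthogonal_eq_bot, Submodule.mem_bot, sub_eq_zero] at hmem

theorem apply_orthogonalProjectionOnto_range (hT : T.IsSymmetric)
    [(LinearMap.range T).HasOrthogonalProjection] (u : E) :
    T ((LinearMap.range T).orthogonalProjectionOnto u) = T u := by
  have h := (LinearMap.range T).sub_starProjection_mem_orthogonal u
  rw [hT.orthogonal_range, LinearMap.mem_ker, map_sub, sub_eq_zero] at h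
  exact h.symm

theorem existsUnique_mem_range_apply_eq (hT : T.IsSymmetric)
    [(LinearMap.range T).HasOrthogonalProjection] {z : E} (hz : z ∈ LinearMap.range T) :
    ∃! y : E, y ∈ LinearMap.range T ∧ T y = z := by
  obtain ⟨u, rfl⟩ := hz
  have hPu := hT.apply_orthogonalProjectionOnto_range u
  refine ⟨_, ⟨Submodule.coe_mem _, hPu⟩, fun y ⟨hy, hyu⟩ => ?_⟩
  exact hT.injOn_range hy (Submodule.coe_mem _) (hyu.trans hPu.symm)

end LinearMap.IsSymmetric

namespace ContinuousLinearMap.IsPositive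

variable {E : Type*} [NormedAddCommGroup E] [InnerProductSpace ℂ E] [CompleteSpace E]
  {B : E →L[ℂ] E}

theorem apply_eq_zero_of_re_inner_eq_zero (hB : B.IsPositive) {x : E}
    (hx : (inner ℂ x (B x)).re = 0) : B x = 0 := by
  obtain ⟨hS, hSS⟩ : IsSelfAdjoint (CFC.sqrt B) ∧ CFC.sqrt B * CFC.sqrt B = B :=
    ⟨(CFC.sqrt_nonneg B).isSelfAdjoint, CFC.sqrt_mul_sqrt_self B (B.nonneg_iff_isPositive.2 hB)⟩
  rw [← hSS, mul_apply_eq_comp, ← hS.isSymmetric.apply_clm] at hx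
  have hSx : CFC.sqrt B x = 0 := by_contra fun h => ((re_inner_self_pos (𝕜 := ℂ)).2 h).ne' hx
  rw [← hSS, mul_apply_eq_comp, hSx, map_zero]

theorem re_inner_pos_of_mem_range (hB : B.IsPositive) {x : E}
    (hx : x ∈ LinearMap.range (B : E →ₗ[ℂ] E)) (hx0 : x ≠ 0) : 0 < (inner ℂ x (B x)).re := by
  refine (hB.re_inner_nonneg_right x).lt_of_ne fun h => hx0 ?_
  refine hB.isSymmetric.injOn_range hx (Submodule.zero_mem _) ?_
  rw [coe_coe, hB.apply_eq_zero_of_re_inner_eq_zero h.symm, map_zero]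

end ContinuousLinearMap.IsPositive

section Asymptotics

variable {E : Type*} [NormedAddCommGroup E] [NormedSpace ℂ E] {f : ℝ → E} {a b : E}

theorem tendsto_ofReal_inv_atTop_zero : Tendsto (fun β : ℝ => (β : ℂ)⁻¹) atTop (𝓝 0) := by
  simpa [Function.comp_def] using (Complex.continuous_ofReal.tendsto 0).comp tendsto_inv_atTop_zero

theorem tendsto_smul_sub_of_isBigO_inv_sq
    (h : (fun β : ℝ => f β - (a + (β : ℂ)⁻¹ • b)) =O[atTop] fun β : ℝ => (β ^ 2)⁻¹) :
    Tendsto (fun β : ℝ => (β : ℂ) • (f β - a)) atTop (𝓝 b) := by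
  have hβ : (fun β : ℝ => (β : ℂ)) =O[atTop] fun β : ℝ => β := isBigO_of_le _ fun β => by simp
  have hrem : Tendsto (fun β : ℝ => (β : ℂ) • (f β - (a + (β : ℂ)⁻¹ • b))) atTop (𝓝 0) :=
    (hβ.smul h).trans_tendsto <| tendsto_inv_atTop_zero.congr fun β => by
      rw [smul_eq_mul]; field_simp
  rw [← zero_add b]
  refine (hrem.add_const b).congr' ?_
  filter_upwards [eventually_ne_atTop 0] with β hβ
  rw [smul_sub, smul_sub, smul_add, smul_smul, mul_inv_cancel₀ (Complex.ofReal_ne_zero.2 hβ),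
    one_smul]
  abel

theorem tendsto_of_isBigO_inv_sq
    (h : (fun β : ℝ => f β - (a + (β : ℂ)⁻¹ • b)) =O[atTop] fun β : ℝ => (β ^ 2)⁻¹) :
    Tendsto f atTop (𝓝 a) := by
  have hlim :=
    (tendsto_ofReal_inv_atTop_zero.smul (tendsto_smul_sub_of_isBigO_inv_sq h)).const_add a
  rw [zero_smul, add_zero] at hlim
  refine hlim.congr' ?_
  filter_upwards [eventually_ne_atTop 0] with β hβ
  rw [smul_smul, inv_mul_cancel₀ (Complex.ofReal_ne_zero.2 hβ), one_smul, add_sub_cancel]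

theorem eq_of_tendsto_eigenvector {Ω B : E →L[ℂ] E} {w : ℝ → E} {ζ : ℝ → ℂ} {w₀ v : E} {ρ : ℂ}
    (heig : ∀ᶠ β : ℝ in atTop, Ω (w β) - (Complex.I * β) • B (w β) = ζ β • w β)
    (hw : Tendsto w atTop (𝓝 w₀)) (hζ : Tendsto ζ atTop (𝓝 ρ))
    (hBw : Tendsto (fun β : ℝ => (β : ℂ) • B (w β)) atTop (𝓝 v)) :
    Ω w₀ = ρ • w₀ + Complex.I • v := by
  have hlim := (hζ.smul hw).add (hBw.const_smul Complex.I)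
  refine tendsto_nhds_unique ((Ω.continuous.tendsto w₀).comp hw) (hlim.congr' ?_)
  filter_upwards [heig] with β hβ
  rw [← hβ, smul_smul, Function.comp_apply, sub_add_cancel]

end Asymptotics

namespace Thm1Family

variable {V : Type*} [NormedAddCommGroup V] [InnerProductSpace ℂ V]
  {Ω B : V →L[ℂ] V} (F : Thm1Family Ω B) {j : Fin (Module.finrank ℂ V)}

theorem apply_w0_of_low (hj : Module.finrank ℂ (LinearMap.range (B : V →ₗ[ℂ] V)) ≤ j) :
    Ω (F.w0 j) = (F.ρ j : ℂ) • F.w0 j + Complex.I • B (F.wneg j) := by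
  have hw := F.w_low j hj
  have hζ : (fun β : ℝ => F.ζ j β - ((F.ρ j : ℂ) + (β : ℂ)⁻¹ • (-Complex.I * F.d j)))
      =O[atTop] fun β : ℝ => (β ^ 2)⁻¹ :=
    (F.ζ_low j hj).congr_left fun β => by simp only [ρ, d, smul_eq_mul]; ring
  have hBw : Tendsto (fun β : ℝ => (β : ℂ) • B (F.w j β)) atTop (𝓝 (B (F.wneg j))) := by
    refine ((B.continuous.tendsto _).comp (tendsto_smul_sub_of_isBigO_inv_sq hw)).congr
      fun β => ?_
    rw [Function.comp_apply, map_smul, map_sub, F.eig0_low j hj, sub_zero]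
  refine eq_of_tendsto_eigenvector ?_ (tendsto_of_isBigO_inv_sq hw)
    (tendsto_of_isBigO_inv_sq hζ) hBw
  filter_upwards [eventually_gt_atTop F.β₀] with β hβ
  simpa only [sysOp, sub_apply, smul_apply] using F.eig β hβ j

theorem orthogonalProjectionOnto_apply_w0_of_low (hB : (B : V →ₗ[ℂ] V).IsSymmetric)
    [(LinearMap.range (B : V →ₗ[ℂ] V)).HasOrthogonalProjection]
    (hj : Module.finrank ℂ (LinearMap.range (B : V →ₗ[ℂ] V)) ≤ j) :
    ((LinearMap.range (B : V →ₗ[ℂ] V)).orthogonalProjectionOnto (Ω (F.w0 j)) : V)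
      = Complex.I • B (F.wneg j) := by
  have hw0 : F.w0 j ∈ (LinearMap.range (B : V →ₗ[ℂ] V))ᗮ := by
    rw [hB.orthogonal_range]
    exact F.eig0_low j hj
  have hBv : Complex.I • B (F.wneg j) ∈ LinearMap.range (B : V →ₗ[ℂ] V) :=
    Submodule.smul_mem _ _ ⟨F.wneg j, rfl⟩
  rw [F.apply_w0_of_low hj, map_add, map_smul,
    Submodule.orthogonalProjectionOnto_apply_of_mem_orthogonal hw0, smul_zero, zero_add,
    ← Submodule.starProjection_apply, Submodule.starProjection_eq_self_iff.2 hBv]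

theorem sub_orthogonalProjectionOnto_apply_w0_of_low (hB : (B : V →ₗ[ℂ] V).IsSymmetric)
    [(LinearMap.range (B : V →ₗ[ℂ] V)).HasOrthogonalProjection]
    (hj : Module.finrank ℂ (LinearMap.range (B : V →ₗ[ℂ] V)) ≤ j) :
    Ω (F.w0 j) - ((LinearMap.range (B : V →ₗ[ℂ] V)).orthogonalProjectionOnto (Ω (F.w0 j)) : V)
      = (F.ρ j : ℂ) • F.w0 j := by
  rw [F.orthogonalProjectionOnto_apply_w0_of_low hB hj, F.apply_w0_of_low hj,
    add_sub_cancel_right]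

theorem d_eq_inner_orthogonalProjectionOnto (hB : (B : V →ₗ[ℂ] V).IsSymmetric)
    [(LinearMap.range (B : V →ₗ[ℂ] V)).HasOrthogonalProjection]
    (hj : Module.finrank ℂ (LinearMap.range (B : V →ₗ[ℂ] V)) ≤ j) {y : V}
    (hy : B y = ((LinearMap.range (B : V →ₗ[ℂ] V)).orthogonalProjectionOnto (Ω (F.w0 j)) : V)) :
    (F.d j : ℂ) = inner ℂ
      ((LinearMap.range (B : V →ₗ[ℂ] V)).orthogonalProjectionOnto (Ω (F.w0 j)) : V) y := by
  rw [F.orthogonalProjectionOnto_apply_w0_of_low hB hj] at hy ⊢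
  calc (F.d j : ℂ) = inner ℂ (F.wneg j) (B (F.wneg j)) :=
        hB.coe_re_inner_self_apply _
    _ = -Complex.I * inner ℂ (F.wneg j) (Complex.I • B (F.wneg j)) := by
        rw [inner_smul_right, ← mul_assoc, neg_mul, Complex.I_mul_I, neg_neg, one_mul]
    _ = -Complex.I * inner ℂ (B (F.wneg j)) y := by rw [← hy, hB.apply_clm]
    _ = inner ℂ (Complex.I • B (F.wneg j)) y := by rw [inner_smul_left, Complex.conj_I]

end Thm1Family

theorem statement5_general
    (Ω B : H →L[ℂ] H) (hB : IsSelfAdjoint B)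
    (hBpos : ∀ x : H, 0 ≤ (inner ℂ x (B x) : ℂ).re)
    (F : Thm1Family Ω B) :
    (∀ j : Fin (Module.finrank ℂ H),
      (j : ℕ) < Module.finrank ℂ (LinearMap.range (B : H →ₗ[ℂ] H)) →
        B (F.w0 j) = (F.ζ0 j : ℂ) • F.w0 j) ∧
    (∀ x : H, x ∈ LinearMap.range (B : H →ₗ[ℂ] H) → x ≠ 0 → 0 < (inner ℂ x (B x) : ℂ).re) ∧
    (∀ z : H, z ∈ LinearMap.range (B : H →ₗ[ℂ] H) → ∃! y : H, y ∈ LinearMap.range (B : H →ₗ[ℂ] H) ∧ B y = z) ∧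
    (∀ j : Fin (Module.finrank ℂ H),
      Module.finrank ℂ (LinearMap.range (B : H →ₗ[ℂ] H)) ≤ (j : ℕ) →
        Ω (F.w0 j) - ((LinearMap.range (B : H →ₗ[ℂ] H)).orthogonalProjectionOnto (Ω (F.w0 j)) : H)
          = (F.ρ j : ℂ) • F.w0 j) ∧
    (∀ j : Fin (Module.finrank ℂ H),
      Module.finrank ℂ (LinearMap.range (B : H →ₗ[ℂ] H)) ≤ (j : ℕ) →
        ∀ y : H, y ∈ LinearMap.range (B : H →ₗ[ℂ] H) →
          B y = ((LinearMap.range (B : H →ₗ[ℂ] H)).orthogonalProjectionOnto (Ω (F.w0 j)) : H) →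
          (F.d j : ℂ)
            = inner ℂ (((LinearMap.range (B : H →ₗ[ℂ] H)).orthogonalProjectionOnto (Ω (F.w0 j)) : H)) y) := by
  have hB_pos : B.IsPositive :=
    ContinuousLinearMap.isPositive_def'.2 ⟨hB, fun x => by
      rw [ContinuousLinearMap.reApplyInnerSelf_apply, ← inner_re_symm]
      exact hBpos x⟩
  exact ⟨F.eig0_high, fun x hx hx0 => hB_pos.re_inner_pos_of_mem_range hx hx0,
    fun z hz => hB.isSymmetric.existsUnique_mem_range_apply_eq hz,
    fun j hj => F.sub_orthogonalProjectionOnto_apply_w0_of_low hB.isSymmetric hj,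
    fun j hj y _ hy => F.d_eq_inner_orthogonalProjectionOnto hB.isSymmetric hj hy⟩

/-- **Proposition 3: asymptotic spectrum.**
For every Theorem-1 family:
(1) `B₂ ẘ_j = ζ̊_j ẘ_j` for the high-loss indices (the `ẘ_j` being a complete
orthonormal eigenbasis of `B₂` on `H_B`), and `B₂` is positive definite — hence
invertible, with positive definite inverse — on `H_B = ran B`;
(2) for the low-loss indices, `Ω₁ ẘ_j = ρ_j ẘ_j`, i.e.
`Ω ẘ_j − P_B Ω ẘ_j = ρ_j ẘ_j`;
(3) `d_j = (ẘ_j, Θ* B₂⁻¹ Θ ẘ_j)`, expressed via the unique `y ∈ ran B` with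
`B y = P_B Ω ẘ_j`, as `d_j = (P_B Ω ẘ_j, y)`. -/
theorem statement5
    (Ω B : H →L[ℂ] H) (hΩ : IsSelfAdjoint Ω) (hB : IsSelfAdjoint B)
    (hBpos : ∀ x : H, 0 ≤ (inner ℂ x (B x) : ℂ).re)
    (hNB_pos : 0 < Module.finrank ℂ (LinearMap.range (B : H →ₗ[ℂ] H)))
    (hNB_lt : Module.finrank ℂ (LinearMap.range (B : H →ₗ[ℂ] H)) < Module.finrank ℂ H)
    (F : Thm1Family Ω B) :
    (∀ j : Fin (Module.finrank ℂ H),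
      (j : ℕ) < Module.finrank ℂ (LinearMap.range (B : H →ₗ[ℂ] H)) →
        B (F.w0 j) = (F.ζ0 j : ℂ) • F.w0 j) ∧
    (∀ x : H, x ∈ LinearMap.range (B : H →ₗ[ℂ] H) → x ≠ 0 → 0 < (inner ℂ x (B x) : ℂ).re) ∧
    (∀ z : H, z ∈ LinearMap.range (B : H →ₗ[ℂ] H) → ∃! y : H, y ∈ LinearMap.range (B : H →ₗ[ℂ] H) ∧ B y = z) ∧
    (∀ j : Fin (Module.finrank ℂ H),
      Module.finrank ℂ (LinearMap.range (B : H →ₗ[ℂ] H)) ≤ (j : ℕ) →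
        Ω (F.w0 j) - ((LinearMap.range (B : H →ₗ[ℂ] H)).orthogonalProjectionOnto (Ω (F.w0 j)) : H)
          = (F.ρ j : ℂ) • F.w0 j) ∧
    (∀ j : Fin (Module.finrank ℂ H),
      Module.finrank ℂ (LinearMap.range (B : H →ₗ[ℂ] H)) ≤ (j : ℕ) →
        ∀ y : H, y ∈ LinearMap.range (B : H →ₗ[ℂ] H) →
          B y = ((LinearMap.range (B : H →ₗ[ℂ] H)).orthogonalProjectionOnto (Ω (F.w0 j)) : H) →
          (F.d j : ℂ)
            = inner ℂ (((LinearMap.range (B : H →ₗ[ℂ] H)).orthogonalProjectionOnto (Ω (F.w0 j)) : H)) y) :=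
  statement5_general Ω B hB hBpos F
end
end

section
/- Energy and dissipation of the eigenmodes (Proposition 4). For every Theorem-1 family, as β → ∞: U[w_j(β)] = 1/2 + O(β⁻¹) for every 1 ≤ j ≤ N; W_dis[w_j(β)] = ζ̊_j β + O(1) for the high-loss indices 1 ≤ j ≤ N_B; and W_dis[w_j(β)] = d_j β⁻¹ + O(β⁻²) for the low-loss indices N_B+1 ≤ j ≤ N. In particular, W_dis[w_j(β)] → ∞ as β → ∞ for 1 ≤ j ≤ N_B and W_dis[w_j(β)] → 0 as β → ∞ for N_B+1 ≤ j ≤ N. -/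
open Filter Asymptotics

noncomputable section

variable {H : Type*} [NormedAddCommGroup H] [InnerProductSpace ℂ H] [FiniteDimensional ℂ H]

/-- The energy `U[w] = ½ (w, w)` of a mode `w`. -/
def energy (x : H) : ℝ := (1 / 2) * ‖x‖ ^ 2

/-- The power of energy dissipation `W_dis[w] = β (w, B w)` of a mode `w`. -/
def dissip (B : H →L[ℂ] H) (β : ℝ) (x : H) : ℝ := β * (inner ℂ x (B x) : ℂ).re

/-!
Each branch `w_j(β)` converges to the unit vector `ẘ_j` at rate `β⁻¹`, and a quadratic form
`x ↦ ⟪x, T x⟫` moves at the rate of its argument along such a curve. With `T = id` this gives the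
energy; with `T = B` and `⟪ẘ_j, B ẘ_j⟫ = ζ̊_j` it gives `W_dis = ζ̊_j β + O(1)` for high-loss
modes. For low-loss modes `B ẘ_j = 0` and `B` is self-adjoint, so
`⟪w, B w⟫ = ⟪w - ẘ_j, B (w - ẘ_j)⟫ = β⁻² ⟪u, B u⟫` with `u = β (w - ẘ_j) → w_j^{(−1)}` at rate
`β⁻¹`, which gives `W_dis = d_j β⁻¹ + O(β⁻²)`.
-/

open scoped InnerProductSpace

section QuadraticForms

variable {𝕜 E α : Type*} [RCLike 𝕜] {l : Filter α}

theorem Asymptotics.IsBigO.inner [SeminormedAddCommGroup E] [InnerProductSpace 𝕜 E]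
    {f g : α → E} {u v : α → ℝ} (hf : f =O[l] u) (hg : g =O[l] v) :
    (fun a => ⟪f a, g a⟫_𝕜) =O[l] fun a => u a * v a :=
  (isBigO_of_le l fun a => (norm_inner_le_norm (f a) (g a)).trans (le_abs_self _)).trans
    (hf.norm_left.mul hg.norm_left)

theorem isBigO_inner_map_self_sub [SeminormedAddCommGroup E] [InnerProductSpace 𝕜 E]
    (T : E →L[𝕜] E) {x : α → E} {x₀ : E} {g : α → ℝ}
    (hx : (fun a => x a - x₀) =O[l] g) (hg : g =O[l] fun _ => (1 : ℝ)) :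
    (fun a => ⟪x a, T (x a)⟫_𝕜 - ⟪x₀, T x₀⟫_𝕜) =O[l] g := by
  have hx_bdd : x =O[l] fun _ => (1 : ℝ) := by
    simpa using (hx.trans hg).add (isBigO_const_const x₀ one_ne_zero l)
  have h₁ : (fun a => ⟪x a - x₀, T (x a)⟫_𝕜) =O[l] g := by
    simpa using hx.inner ((T.isBigO_comp x l).trans hx_bdd)
  have h₂ : (fun a => ⟪x₀, T (x a - x₀)⟫_𝕜) =O[l] g := by
    simpa using (isBigO_const_const x₀ one_ne_zero l).inner ((T.isBigO_comp _ l).trans hx)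
  refine (h₁.add h₂).congr_left fun a => ?_
  simp only [map_sub, inner_sub_left, inner_sub_right]
  ring

theorem isBigO_energy_sub [NormedAddCommGroup E] [InnerProductSpace 𝕜 E]
    {x : α → E} {x₀ : E} {g : α → ℝ} (hx₀ : ‖x₀‖ = 1)
    (hx : (fun a => x a - x₀) =O[l] g) (hg : g =O[l] fun _ => (1 : ℝ)) :
    (fun a => energy (x a) - 1 / 2) =O[l] g := by
  have h := (RCLike.reCLM.isBigO_comp _ l).trans
    (isBigO_inner_map_self_sub (𝕜 := 𝕜) (ContinuousLinearMap.id 𝕜 E) hx hg)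
  refine (h.const_mul_left (1 / 2)).congr_left fun a => ?_
  simp only [energy, ContinuousLinearMap.id_apply, RCLike.reCLM_apply, map_sub,
    inner_self_eq_norm_sq, hx₀]
  ring

theorem inner_map_self_add_of_map_eq_zero [SeminormedAddCommGroup E] [InnerProductSpace 𝕜 E]
    {T : E →L[𝕜] E} (hT : (T : E →ₗ[𝕜] E).IsSymmetric) {x₀ : E} (hx₀ : T x₀ = 0) (v : E) :
    ⟪x₀ + v, T (x₀ + v)⟫_𝕜 = ⟪v, T v⟫_𝕜 := by
  have hx₀v : ⟪x₀, T v⟫_𝕜 = 0 := by simpa [hx₀] using (hT x₀ v).symm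
  rw [map_add, hx₀, zero_add, inner_add_left, hx₀v, zero_add]

end QuadraticForms

section Dissipation

variable {E : Type*} [NormedAddCommGroup E] [InnerProductSpace ℂ E]

theorem isBigO_smul_sub_of_first_order {x : ℝ → E} {x₀ y : E}
    (hx : (fun β : ℝ => x β - (x₀ + (β : ℂ)⁻¹ • y)) =O[atTop] fun β => (β ^ 2)⁻¹) :
    (fun β : ℝ => (β : ℂ) • (x β - x₀) - y) =O[atTop] fun β => β⁻¹ := by
  have hβ : (fun β : ℝ => (β : ℂ)) =O[atTop] fun β => β :=
    isBigO_of_le _ fun β => by simp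
  refine (hβ.smul hx).congr' ?_ ?_
  · filter_upwards [eventually_ne_atTop 0] with β hβ
    rw [smul_sub, smul_add, smul_inv_smul₀ (by exact_mod_cast hβ), smul_sub]
    abel
  · filter_upwards [eventually_ne_atTop 0] with β hβ
    simp only [smul_eq_mul]
    field_simp

theorem isBigO_sub_of_first_order {x : ℝ → E} {x₀ y : E}
    (hx : (fun β : ℝ => x β - (x₀ + (β : ℂ)⁻¹ • y)) =O[atTop] fun β => (β ^ 2)⁻¹) :
    (fun β => x β - x₀) =O[atTop] fun β => β⁻¹ := by
  have hβ : (fun β : ℝ => (β : ℂ)⁻¹) =O[atTop] fun β => β⁻¹ :=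
    isBigO_of_le _ fun β => by simp
  have hu : (fun β : ℝ => (β : ℂ) • (x β - x₀)) =O[atTop] fun _ => (1 : ℝ) :=
    ((isBigO_smul_sub_of_first_order hx).trans (tendsto_inv_atTop_zero.isBigO_one ℝ)).add
      (isBigO_const_const y one_ne_zero _) |>.congr_left fun β => sub_add_cancel _ _
  refine (hβ.smul hu).congr' ?_ ?_
  · filter_upwards [eventually_ne_atTop 0] with β hβ
    rw [inv_smul_smul₀ (by exact_mod_cast hβ)]
  · exact .of_eq (funext fun β => smul_eq_mul .. |>.trans (mul_one _))

theorem isBigO_dissip_sub_of_eigenvector (B : E →L[ℂ] E) {x : ℝ → E} {x₀ : E} {ζ₀ : ℝ}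
    (hBx₀ : B x₀ = (ζ₀ : ℂ) • x₀) (hx₀ : ‖x₀‖ = 1)
    (hx : (fun β => x β - x₀) =O[atTop] fun β => β⁻¹) :
    (fun β => dissip B β (x β) - ζ₀ * β) =O[atTop] fun _ => (1 : ℝ) := by
  have hq : (⟪x₀, B x₀⟫_ℂ).re = ζ₀ := by
    simp [hBx₀, inner_self_eq_norm_sq_to_K, hx₀]
  have h := (Complex.reCLM.isBigO_comp _ _).trans
    (isBigO_inner_map_self_sub B hx (tendsto_inv_atTop_zero.isBigO_one ℝ))
  refine (((isBigO_refl (fun β : ℝ => β) _).mul h).congr_left fun β => ?_).trans ?_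
  · simp only [dissip, Complex.reCLM_apply, Complex.sub_re, hq]
    ring
  · refine EventuallyEq.isBigO ?_
    filter_upwards [eventually_ne_atTop 0] with β hβ
    exact mul_inv_cancel₀ hβ

theorem isBigO_dissip_sub_of_map_eq_zero {B : E →L[ℂ] E} (hB : (B : E →ₗ[ℂ] E).IsSymmetric)
    {x : ℝ → E} {x₀ y : E} (hBx₀ : B x₀ = 0)
    (hx : (fun β : ℝ => x β - (x₀ + (β : ℂ)⁻¹ • y)) =O[atTop] fun β => (β ^ 2)⁻¹) :
    (fun β => dissip B β (x β) - (⟪y, B y⟫_ℂ).re * β⁻¹) =O[atTop] fun β => (β ^ 2)⁻¹ := by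
  have h := (Complex.reCLM.isBigO_comp _ _).trans (isBigO_inner_map_self_sub B
    (isBigO_smul_sub_of_first_order hx) (tendsto_inv_atTop_zero.isBigO_one ℝ))
  refine ((isBigO_refl (fun β : ℝ => β⁻¹) _).mul h).congr' ?_ ?_
  · filter_upwards [eventually_ne_atTop 0] with β hβ
    set u := (β : ℂ) • (x β - x₀)
    have hx : x β = x₀ + (β : ℂ)⁻¹ • u := by
      rw [inv_smul_smul₀ (by exact_mod_cast hβ), add_sub_cancel]
    have hq : ⟪x β, B (x β)⟫_ℂ = ((β ^ 2)⁻¹ : ℝ) * ⟪u, B u⟫_ℂ := by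
      rw [hx, inner_map_self_add_of_map_eq_zero hB hBx₀, map_smul, inner_smul_left,
        inner_smul_right, ← mul_assoc]
      congr 1
      simp [sq]
    simp only [dissip, hq, Complex.reCLM_apply, Complex.sub_re, Complex.re_ofReal_mul]
    field_simp
  · exact .of_forall fun β => by simp only [sq, mul_inv]

end Dissipation

theorem Filter.Tendsto.atTop_of_isBigO_one_sub {α : Type*} {l : Filter α} {f g : α → ℝ}
    (hg : Tendsto g l atTop) (hfg : (fun a => f a - g a) =O[l] fun _ => (1 : ℝ)) :
    Tendsto f l atTop := by
  have hbdd : IsBoundedUnder (· ≤ ·) l fun a => g a - f a :=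
    ((isBigO_one_iff ℝ).1 hfg.neg_left).mono_le (.of_forall fun a => by
      simpa using Real.le_norm_self (g a - f a))
  exact Tendsto.atTop_of_isBoundedUnder_le_add hbdd (by simpa using hg)

theorem statement7_general
    (Ω B : H →L[ℂ] H) (hB : IsSelfAdjoint B)
    (F : Thm1Family Ω B) :
    (∀ j : Fin (Module.finrank ℂ H),
      (fun β : ℝ => energy (F.w j β) - 1 / 2) =O[atTop] fun β : ℝ => β⁻¹) ∧
    (∀ j : Fin (Module.finrank ℂ H),
      (j : ℕ) < Module.finrank ℂ (LinearMap.range (B : H →ₗ[ℂ] H)) →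
        (fun β : ℝ => dissip B β (F.w j β) - F.ζ0 j * β) =O[atTop] fun _ : ℝ => (1 : ℝ)) ∧
    (∀ j : Fin (Module.finrank ℂ H),
      Module.finrank ℂ (LinearMap.range (B : H →ₗ[ℂ] H)) ≤ (j : ℕ) →
        (fun β : ℝ => dissip B β (F.w j β) - F.d j * β⁻¹) =O[atTop] fun β : ℝ => (β ^ 2)⁻¹) ∧
    (∀ j : Fin (Module.finrank ℂ H),
      (j : ℕ) < Module.finrank ℂ (LinearMap.range (B : H →ₗ[ℂ] H)) →
        Tendsto (fun β : ℝ => dissip B β (F.w j β)) atTop atTop) ∧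
    (∀ j : Fin (Module.finrank ℂ H),
      Module.finrank ℂ (LinearMap.range (B : H →ₗ[ℂ] H)) ≤ (j : ℕ) →
        Tendsto (fun β : ℝ => dissip B β (F.w j β)) atTop (nhds 0)) := by
  have hinv : (fun β : ℝ => β⁻¹) =O[atTop] fun _ => (1 : ℝ) := tendsto_inv_atTop_zero.isBigO_one ℝ
  have high := fun j hj =>
    isBigO_dissip_sub_of_eigenvector B (F.eig0_high j hj) (F.orth.1 j) (F.w_high j hj)
  have low := fun j hj =>
    isBigO_dissip_sub_of_map_eq_zero hB.isSymmetric (F.eig0_low j hj) (F.w_low j hj)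
  refine ⟨fun j => ?_, high, low, fun j hj => ?_, fun j hj => ?_⟩
  · rcases lt_or_ge (j : ℕ) (Module.finrank ℂ (LinearMap.range (B : H →ₗ[ℂ] H))) with hj | hj
    · exact isBigO_energy_sub (𝕜 := ℂ) (F.orth.1 j) (F.w_high j hj) hinv
    · exact isBigO_energy_sub (𝕜 := ℂ) (F.orth.1 j) (isBigO_sub_of_first_order (F.w_low j hj)) hinv
  · exact (tendsto_id.const_mul_atTop (F.ζ0_pos j hj)).atTop_of_isBigO_one_sub (high j hj)
  · have hsq : Tendsto (fun β : ℝ => (β ^ 2)⁻¹) atTop (nhds 0) :=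
      tendsto_inv_atTop_zero.comp (tendsto_pow_atTop two_ne_zero)
    simpa [Thm1Family.d] using
      ((low j hj).trans_tendsto hsq).add (tendsto_inv_atTop_zero.const_mul (F.d j))

/-- **Proposition 4: energy and dissipation of eigenmodes.**
For every Theorem-1 family, as `β → ∞`:
`U[w_j(β)] = 1/2 + O(β⁻¹)` for every `j`;
`W_dis[w_j(β)] = ζ̊_j β + O(1)` for the high-loss indices, and
`W_dis[w_j(β)] = d_j β⁻¹ + O(β⁻²)` for the low-loss indices.
In particular `W_dis[w_j(β)] → ∞` for high-loss modes and `→ 0` for low-loss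
modes as `β → ∞`. -/
theorem statement7
    (Ω B : H →L[ℂ] H) (hΩ : IsSelfAdjoint Ω) (hB : IsSelfAdjoint B)
    (hBpos : ∀ x : H, 0 ≤ (inner ℂ x (B x) : ℂ).re)
    (hNB_pos : 0 < Module.finrank ℂ (LinearMap.range (B : H →ₗ[ℂ] H)))
    (hNB_lt : Module.finrank ℂ (LinearMap.range (B : H →ₗ[ℂ] H)) < Module.finrank ℂ H)
    (F : Thm1Family Ω B) :
    (∀ j : Fin (Module.finrank ℂ H),
      (fun β : ℝ => energy (F.w j β) - 1 / 2) =O[atTop] fun β : ℝ => β⁻¹) ∧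
    (∀ j : Fin (Module.finrank ℂ H),
      (j : ℕ) < Module.finrank ℂ (LinearMap.range (B : H →ₗ[ℂ] H)) →
        (fun β : ℝ => dissip B β (F.w j β) - F.ζ0 j * β) =O[atTop] fun _ : ℝ => (1 : ℝ)) ∧
    (∀ j : Fin (Module.finrank ℂ H),
      Module.finrank ℂ (LinearMap.range (B : H →ₗ[ℂ] H)) ≤ (j : ℕ) →
        (fun β : ℝ => dissip B β (F.w j β) - F.d j * β⁻¹) =O[atTop] fun β : ℝ => (β ^ 2)⁻¹) ∧
    (∀ j : Fin (Module.finrank ℂ H),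
      (j : ℕ) < Module.finrank ℂ (LinearMap.range (B : H →ₗ[ℂ] H)) →
        Tendsto (fun β : ℝ => dissip B β (F.w j β)) atTop atTop) ∧
    (∀ j : Fin (Module.finrank ℂ H),
      Module.finrank ℂ (LinearMap.range (B : H →ₗ[ℂ] H)) ≤ (j : ℕ) →
        Tendsto (fun β : ℝ => dissip B β (F.w j β)) atTop (nhds 0)) :=
  statement7_general Ω B hB F
end
end
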